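/- arXiv:2110.03565 — 4 statements merged into one kernel-verified Lean document; each statement's English description precedes it below -/
import Mathlib

section
/- Let V and H be complex Hilbert spaces, J : V → H an injective continuous linear map, T > 0 and α > 0. For each t ∈ [0,T] let a(t,·,·) : V × V → ℂ be a sesquilinear form. Let P : H → H be a continuous linear map which is idempotent (P ∘ P = P) and self-adjoint (⟨Px, y⟩_H = ⟨x, Py⟩_H for all x, y ∈ H), and let Q : V → V be a continuous linear idempotent with J ∘ Q = P ∘ J. Let u : [0,T] → V be such that J ∘ u is differentiable at every t ∈ [0,T] (as a map into H) and such that for every t ∈ [0,T] and every y ∈ V one has ⟨(J ∘ u)'(t), J y⟩_H = −a(t, Q(u(t)), Q y) − α⟨(I−Q)(u(t)), (I−Q) y⟩_V. If Q(u(0)) = u(0), then Q(u(t)) = u(t) for every t ∈ [0,T]. -/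
/-!
Put `v(t) = u(t) - Q u(t)`. Since `J Q = P J`, the energy `‖J v(t)‖²` is the squared norm of
`(1 - P) J u(t)`, whose derivative is `2 Re ⟪(1 - P) J u, (1 - P) (J u)'⟫`. As `P` is a symmetric
projection this equals `2 Re ⟪J v, (J u)'⟫`, which the equation with test vector `y = v` evaluates
to `-2α ‖v‖²` (the form term vanishes because `Q v = 0`). So the energy is nonincreasing; it
vanishes at `t = 0`, hence everywhere, and injectivity of `J` gives `v = 0`.
-/

open Set

open scoped InnerProductSpace

theorem eq_zero_of_hasDerivAt_of_inner_nonpos {F : Type*} [NormedAddCommGroup F]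
    [InnerProductSpace ℝ F] {w w' : ℝ → F} {a b : ℝ}
    (hw : ∀ t ∈ Icc a b, HasDerivAt w (w' t) t) (hw' : ∀ t ∈ Icc a b, ⟪w t, w' t⟫_ℝ ≤ 0)
    (ha : w a = 0) : ∀ t ∈ Icc a b, w t = 0 := by
  have henergy : ∀ t ∈ Icc a b, HasDerivAt (‖w ·‖ ^ 2) (2 * ⟪w t, w' t⟫_ℝ) t :=
    fun t ht => (hw t ht).norm_sq
  have hanti : AntitoneOn (‖w ·‖ ^ 2) (Icc a b) := by
    refine antitoneOn_of_hasDerivWithinAt_nonpos (convex_Icc a b)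
      (fun t ht => (henergy t ht).continuousAt.continuousWithinAt)
      (fun t ht => (henergy t (interior_subset ht)).hasDerivWithinAt) fun t ht => ?_
    linarith [hw' t (interior_subset ht)]
  intro t ht
  have hle : ‖w t‖ ^ 2 ≤ ‖w a‖ ^ 2 := hanti ⟨le_rfl, ht.1.trans ht.2⟩ ht ht.1
  simpa [ha] using hle

theorem ContinuousLinearMap.inner_sub_apply_sub_apply_of_isSymmetric {𝕜 E : Type*} [RCLike 𝕜]
    [NormedAddCommGroup E] [InnerProductSpace 𝕜 E] {P : E →L[𝕜] E}
    (hP : (P : E →ₗ[𝕜] E).IsSymmetric) (hPidem : ∀ x, P (P x) = P x) (x y : E) :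
    ⟪x - P x, y - P y⟫_𝕜 = ⟪x - P x, y⟫_𝕜 := by
  have hPx : ⟪P (x - P x), y⟫_𝕜 = ⟪x - P x, P y⟫_𝕜 := hP _ _
  rw [inner_sub_right, ← hPx, map_sub, hPidem, sub_self, inner_zero_left, sub_zero]

theorem stmt4_general {V H : Type*} [NormedAddCommGroup V] [InnerProductSpace ℂ V]
    [NormedAddCommGroup H] [InnerProductSpace ℂ H]
    (J : V →L[ℂ] H) (hJ : Function.Injective J)
    (T α : ℝ) (hα : 0 < α)
    (a : ℝ → V →ₗ[ℂ] V →ₛₗ[starRingEnd ℂ] ℂ)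
    (P : H →L[ℂ] H) (hPidem : ∀ x, P (P x) = P x)
    (hPsa : ∀ x y : H, (inner ℂ (P x) y : ℂ) = inner ℂ x (P y))
    (Q : V →L[ℂ] V) (hQidem : ∀ x, Q (Q x) = Q x)
    (hJQ : ∀ x, J (Q x) = P (J x))
    (u : ℝ → V) (Ju' : ℝ → H)
    (hderiv : ∀ t ∈ Icc 0 T, HasDerivAt (fun s => J (u s)) (Ju' t) t)
    (heq : ∀ t ∈ Icc 0 T, ∀ y : V,
      (inner ℂ (J y) (Ju' t) : ℂ)
        = -(a t (Q (u t)) (Q y))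
          - (α : ℂ) * (inner ℂ (y - Q y) (u t - Q (u t)) : ℂ))
    (h0 : Q (u 0) = u 0) :
    ∀ t ∈ Icc 0 T, Q (u t) = u t := by
  let _ := InnerProductSpace.complexToReal (G := H)
  have hJv : ∀ t, J (u t - Q (u t)) = J (u t) - P (J (u t)) := by simp [hJQ]
  have hQv : ∀ t, Q (u t - Q (u t)) = 0 := by simp [hQidem]
  have hw : ∀ t ∈ Icc 0 T,
      HasDerivAt (fun s => J (u s - Q (u s))) (Ju' t - P (Ju' t)) t := fun t ht => by
    have hPJu : HasDerivAt (fun s => P (J (u s))) (P (Ju' t)) t :=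
      (P.restrictScalars ℝ).hasFDerivAt.comp_hasDerivAt t (hderiv t ht)
    rw [funext hJv]
    exact (hderiv t ht).sub hPJu
  have hw' : ∀ t ∈ Icc 0 T, ⟪J (u t - Q (u t)), Ju' t - P (Ju' t)⟫_ℝ ≤ 0 := fun t ht => by
    rw [real_inner_eq_re_inner ℂ, hJv,
      P.inner_sub_apply_sub_apply_of_isSymmetric hPsa hPidem,
      ← hJv, heq t ht, hQv, map_zero, sub_zero]
    simp only [neg_zero, zero_sub, RCLike.re_to_complex, Complex.neg_re, Complex.re_ofReal_mul,
      Left.neg_nonpos_iff]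
    exact mul_nonneg hα.le (inner_self_nonneg (𝕜 := ℂ))
  intro t ht
  have hv := eq_zero_of_hasDerivAt_of_inner_nonpos hw hw' (by simp [h0]) t ht
  exact (sub_eq_zero.mp (hJ (hv.trans J.map_zero.symm))).symm

/-- Lemma 3.1 (invariance): the solution of the evolution equation governed by the
truncated form starting in the range of `Q` stays in the range of `Q`. -/
theorem stmt4 {V H : Type*} [NormedAddCommGroup V] [InnerProductSpace ℂ V]
    [NormedAddCommGroup H] [InnerProductSpace ℂ H]
    (J : V →L[ℂ] H) (hJ : Function.Injective J)
    (T α : ℝ) (hT : 0 < T) (hα : 0 < α)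
    (a : ℝ → V →ₗ[ℂ] V →ₛₗ[starRingEnd ℂ] ℂ)
    (P : H →L[ℂ] H) (hPidem : ∀ x, P (P x) = P x)
    (hPsa : ∀ x y : H, (inner ℂ (P x) y : ℂ) = inner ℂ x (P y))
    (Q : V →L[ℂ] V) (hQidem : ∀ x, Q (Q x) = Q x)
    (hJQ : ∀ x, J (Q x) = P (J x))
    (u : ℝ → V) (Ju' : ℝ → H)
    (hderiv : ∀ t ∈ Icc 0 T, HasDerivAt (fun s => J (u s)) (Ju' t) t)
    (heq : ∀ t ∈ Icc 0 T, ∀ y : V,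
      (inner ℂ (J y) (Ju' t) : ℂ)
        = -(a t (Q (u t)) (Q y))
          - (α : ℂ) * (inner ℂ (y - Q y) (u t - Q (u t)) : ℂ))
    (h0 : Q (u 0) = u 0) :
    ∀ t ∈ Icc 0 T, Q (u t) = u t :=
  stmt4_general J hJ T α hα a P hPidem hPsa Q hQidem hJQ u Ju' hderiv heq h0
end

section
/- Let V and H be complex Hilbert spaces, J : V → H a continuous linear map, s ≤ T real numbers and M > 0. For each t ∈ [s,T] let a(t,·,·) : V × V → ℂ be a sesquilinear form with |a(t,x,y)| ≤ M‖x‖_V‖y‖_V for all x, y ∈ V and Re a(t,x,x) ≥ 0 for all x ∈ V. Let Q : V → V be a continuous linear idempotent. Let u, u_m : [s,T] → V be such that J ∘ u and J ∘ u_m are differentiable at every t ∈ [s,T] (as maps into H), Q(u_m(t)) = u_m(t) for every t ∈ [s,T], and such that for every t ∈ [s,T] and every y ∈ V one has ⟨(J ∘ u)'(t), J y⟩_H = −a(t, u(t), y) and ⟨(J ∘ u_m)'(t), J y⟩_H = −a(t, u_m(t), Q y). Then for every t ∈ [s,T], the derivative at t of the function t ↦ ½‖J(u_m(t)) − J(u(t))‖_H²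 is less than or equal to M ‖u_m(t)‖_V · ‖u(t) − Q(u(t))‖_V. -/
/-!
With `w = u_m - u`, the derivative of `½‖J w‖²` is `Re ⟪J w, (J u_m)' - (J u)'⟫`. Testing both
equations against `y = w` and using `Q w = w + (u - Q u)` (as `Q u_m = u_m`) turns this into
`Re (-a(w, w) - a(u_m, u - Q u))`: accretivity discards the first term and the bound on `a`
controls the second.
-/

open Set

theorem hasDerivAt_half_norm_sq {H : Type*} [NormedAddCommGroup H] [InnerProductSpace ℂ H]
    {f : ℝ → H} {f' : H} {t : ℝ} (hf : HasDerivAt f f' t) :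
    HasDerivAt (fun r => (1 / 2 : ℝ) * ‖f r‖ ^ 2) (inner ℂ (f t) f').re t := by
  let _ := InnerProductSpace.rclikeToReal ℂ H
  have h := hf.norm_sq.const_mul (1 / 2 : ℝ)
  rwa [real_inner_eq_re_inner ℂ, ← mul_assoc, one_div_mul_cancel two_ne_zero, one_mul] at h

theorem inner_map_sub_sub_eq {𝕜 V H F G : Type*} [RCLike 𝕜] [AddCommGroup V] [Module 𝕜 V]
    [NormedAddCommGroup H] [InnerProductSpace 𝕜 H] [FunLike F V H] [AddMonoidHomClass F V H]
    [FunLike G V V] [AddMonoidHomClass G V V] (J : F)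
    (a : V →ₗ[𝕜] V →ₛₗ[starRingEnd 𝕜] 𝕜) (Q : G) {x v : V} (hx : Q x = x) {p q : H}
    (hp : ∀ y, inner 𝕜 (J y) p = -a x (Q y)) (hq : ∀ y, inner 𝕜 (J y) q = -a v y) :
    inner 𝕜 (J x - J v) (p - q) = -a (x - v) (x - v) - a x (v - Q v) := by
  have hQ : Q (x - v) = (x - v) + (v - Q v) := by rw [map_sub, hx]; abel
  rw [← map_sub, inner_sub_right, hp, hq, hQ]
  simp only [map_add, map_sub, LinearMap.sub_apply]
  ring

theorem stmt5_general {V H : Type*} [NormedAddCommGroup V] [InnerProductSpace ℂ V]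
    [NormedAddCommGroup H] [InnerProductSpace ℂ H]
    (J : V →L[ℂ] H) (s T M : ℝ)
    (a : ℝ → V →ₗ[ℂ] V →ₛₗ[starRingEnd ℂ] ℂ)
    (hbound : ∀ t ∈ Icc s T, ∀ x y : V, ‖a t x y‖ ≤ M * ‖x‖ * ‖y‖)
    (haccr : ∀ t ∈ Icc s T, ∀ x : V, 0 ≤ (a t x x).re)
    (Q : V →L[ℂ] V)
    (u um : ℝ → V) (Ju' Jum' : ℝ → H)
    (hd1 : ∀ t ∈ Icc s T, HasDerivAt (fun r => J (u r)) (Ju' t) t)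
    (hd2 : ∀ t ∈ Icc s T, HasDerivAt (fun r => J (um r)) (Jum' t) t)
    (hum : ∀ t ∈ Icc s T, Q (um t) = um t)
    (he1 : ∀ t ∈ Icc s T, ∀ y : V, (inner ℂ (J y) (Ju' t) : ℂ) = -(a t (u t) y))
    (he2 : ∀ t ∈ Icc s T, ∀ y : V, (inner ℂ (J y) (Jum' t) : ℂ) = -(a t (um t) (Q y))) :
    ∀ t ∈ Icc s T, ∃ d : ℝ,
      HasDerivAt (fun r => (1 / 2 : ℝ) * ‖J (um r) - J (u r)‖ ^ 2) d t ∧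
      d ≤ M * ‖um t‖ * ‖u t - Q (u t)‖ := by
  intro t ht
  refine ⟨_, hasDerivAt_half_norm_sq ((hd2 t ht).sub (hd1 t ht)), ?_⟩
  rw [inner_map_sub_sub_eq J (a t) Q (hum t ht) (he2 t ht) (he1 t ht)]
  set w := um t - u t
  set z := u t - Q (u t)
  calc (-a t w w - a t (um t) z).re
      = -(a t w w).re - (a t (um t) z).re := by simp
    _ ≤ ‖a t (um t) z‖ := by
        linarith [haccr t ht w, neg_le_abs (a t (um t) z).re, Complex.abs_re_le_norm (a t (um t) z)]
    _ ≤ M * ‖um t‖ * ‖z‖ := hbound t ht _ _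

/-- Inequality (bella) in Lemma 3.2: the derivative of `½‖J u_m(t) - J u(t)‖²` is bounded
by `M‖u_m(t)‖_V ‖(I-Q)u(t)‖_V`. -/
theorem stmt5 {V H : Type*} [NormedAddCommGroup V] [InnerProductSpace ℂ V]
    [NormedAddCommGroup H] [InnerProductSpace ℂ H]
    (J : V →L[ℂ] H) (s T M : ℝ) (hsT : s ≤ T) (hM : 0 < M)
    (a : ℝ → V →ₗ[ℂ] V →ₛₗ[starRingEnd ℂ] ℂ)
    (hbound : ∀ t ∈ Icc s T, ∀ x y : V, ‖a t x y‖ ≤ M * ‖x‖ * ‖y‖)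
    (haccr : ∀ t ∈ Icc s T, ∀ x : V, 0 ≤ (a t x x).re)
    (Q : V →L[ℂ] V) (hQ : ∀ x, Q (Q x) = Q x)
    (u um : ℝ → V) (Ju' Jum' : ℝ → H)
    (hd1 : ∀ t ∈ Icc s T, HasDerivAt (fun r => J (u r)) (Ju' t) t)
    (hd2 : ∀ t ∈ Icc s T, HasDerivAt (fun r => J (um r)) (Jum' t) t)
    (hum : ∀ t ∈ Icc s T, Q (um t) = um t)
    (he1 : ∀ t ∈ Icc s T, ∀ y : V, (inner ℂ (J y) (Ju' t) : ℂ) = -(a t (u t) y))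
    (he2 : ∀ t ∈ Icc s T, ∀ y : V, (inner ℂ (J y) (Jum' t) : ℂ) = -(a t (um t) (Q y))) :
    ∀ t ∈ Icc s T, ∃ d : ℝ,
      HasDerivAt (fun r => (1 / 2 : ℝ) * ‖J (um r) - J (u r)‖ ^ 2) d t ∧
      d ≤ M * ‖um t‖ * ‖u t - Q (u t)‖ :=
  stmt5_general J s T M a hbound haccr Q u um Ju' Jum' hd1 hd2 hum he1 he2
end

section
/- Let H be a separable complex Hilbert space and T > 0. Let f : [0,T] × H → H satisfy: (F1) for each x ∈ H the map t ↦ f(t,x) is measurable; (F2) for each t ∈ [0,T] the map f(t,·) is demicontinuous, i.e. whenever x_n → x strongly in H, f(t,x_n) converges weakly to f(t,x); (F3) there exist a > 0 and a nonnegative b ∈ L²([0,T],ℝ) such that ‖f(t,x)‖ ≤ a‖x‖ + b(t) for all (t,x) ∈ [0,T] × H. Then for every u ∈ L²([0,T],H), the function t ↦ f(t,u(t)) is almost everywhere equal to a strongly measurable function and belongs to L²([0,T],H), with ‖f(·,u(·))‖_{L²([0,T],H)} ≤ a‖u‖_{L²([0,T],H)} + ‖b‖_{L²([0,T],ℝ)}.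 In particular the superposition operator N_f(u)(t) := f(t,u(t)) maps bounded subsets of L²([0,T],H) into bounded subsets of L²([0,T],H). -/
open MeasureTheory Set Filter
open scoped ENNReal Topology

/-!
Approximate `u` by simple functions `sₙ`. Each `t ↦ f t (sₙ t)` is measurable by (F1), and by
demicontinuity `⟪y, f t (sₙ t)⟫ → ⟪y, f t (u t)⟫` for every `y`, so `t ↦ f t (u t)` is weakly
measurable, hence a.e. strongly measurable by Pettis' theorem since `H` is separable. The `L²`
bound is Minkowski's inequality applied to the pointwise majorant `a ‖u t‖ + b t`.
-/

def IsDemicontinuous (𝕜 : Type*) {E F : Type*} [RCLike 𝕜] [TopologicalSpace E]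
    [NormedAddCommGroup F] [InnerProductSpace 𝕜 F] (g : E → F) : Prop :=
  ∀ (x : ℕ → E) (x₀ : E), Tendsto x atTop (𝓝 x₀) →
    ∀ y : F, Tendsto (fun n => (inner 𝕜 y (g (x n)) : 𝕜)) atTop (𝓝 (inner 𝕜 y (g x₀)))

section Pettis

variable {𝕜 α F : Type*} [RCLike 𝕜] [MeasurableSpace α] {μ : Measure α}
  [NormedAddCommGroup F] [InnerProductSpace 𝕜 F] [CompleteSpace F]
  [TopologicalSpace.SeparableSpace F] [MeasurableSpace F] [BorelSpace F]

theorem aemeasurable_of_aemeasurable_inner {g : α → F}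
    (h : ∀ y : F, AEMeasurable (fun t => (inner 𝕜 y (g t) : 𝕜)) μ) : AEMeasurable g μ := by
  -- Inner products against a dense sequence embed the Polish space `F` into `ℕ → 𝕜`.
  obtain ⟨D, hD⟩ := TopologicalSpace.exists_dense_seq F
  let φ : F → ℕ → 𝕜 := fun x n => inner 𝕜 (D n) x
  have hφ : MeasurableEmbedding φ :=
    (continuous_pi fun n => continuous_const.inner continuous_id).measurableEmbedding
      fun x y hxy => hD.eq_of_inner_right 𝕜 fun n => congrFun hxy n
  exact hφ.aemeasurable_comp_iff.mp (aemeasurable_pi_lambda _ fun n => h (D n))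

theorem aestronglyMeasurable_of_aemeasurable_inner {g : α → F}
    (h : ∀ y : F, AEMeasurable (fun t => (inner 𝕜 y (g t) : 𝕜)) μ) :
    AEStronglyMeasurable g μ :=
  haveI := UniformSpace.secondCountable_of_separable F
  (aemeasurable_of_aemeasurable_inner h).aestronglyMeasurable

end Pettis

theorem aestronglyMeasurable_superposition {𝕜 α E F : Type*} [RCLike 𝕜] [MeasurableSpace α]
    {μ : Measure α} [TopologicalSpace E]
    [NormedAddCommGroup F] [InnerProductSpace 𝕜 F] [CompleteSpace F]
    [TopologicalSpace.SeparableSpace F] [MeasurableSpace F] [BorelSpace F]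
    {f : α → E → F} (hmeas : ∀ x, Measurable (f · x))
    (hdemi : ∀ᵐ t ∂μ, IsDemicontinuous 𝕜 (f t))
    {u : α → E} (hu : AEStronglyMeasurable u μ) :
    AEStronglyMeasurable (fun t => f t (u t)) μ := by
  refine aestronglyMeasurable_of_aemeasurable_inner (𝕜 := 𝕜) fun y => ?_
  let s := hu.stronglyMeasurable_mk.approx
  refine aemeasurable_of_tendsto_metrizable_ae' (f := fun n t => inner 𝕜 y (f t (s n t)))
    (fun n => ?_) ?_
  · exact (measurable_const.inner ((s n).measurable_bind (fun x t => f t x) hmeas)).aemeasurable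
  · filter_upwards [hdemi, hu.ae_eq_mk] with t ht hut
    rw [hut]
    exact ht _ _ (hu.stronglyMeasurable_mk.tendsto_approx t) y

theorem eLpNorm_le_of_norm_le_mul_add {α E F : Type*} [MeasurableSpace α] {μ : Measure α}
    [NormedAddCommGroup E] [NormedAddCommGroup F] {p : ℝ≥0∞} (hp : 1 ≤ p)
    {g : α → F} {u : α → E} {a : ℝ} {b : α → ℝ} (ha : 0 ≤ a)
    (hu : AEStronglyMeasurable u μ) (hb : AEStronglyMeasurable b μ)
    (hg : ∀ᵐ t ∂μ, ‖g t‖ ≤ a * ‖u t‖ + b t) :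
    eLpNorm g p μ ≤ ENNReal.ofReal a * eLpNorm u p μ + eLpNorm b p μ :=
  calc eLpNorm g p μ
      ≤ eLpNorm (fun t => a * ‖u t‖ + b t) p μ := eLpNorm_mono_ae_real hg
    _ ≤ eLpNorm (fun t => a * ‖u t‖) p μ + eLpNorm b p μ :=
        eLpNorm_add_le (hu.norm.const_mul a) hb hp
    _ = ENNReal.ofReal a * eLpNorm u p μ + eLpNorm b p μ := by
        rw [← eLpNorm_norm u, ← Real.enorm_eq_ofReal ha, ← eLpNorm_const_smul]
        rfl

theorem stmt6_general {H : Type*} [NormedAddCommGroup H] [InnerProductSpace ℂ H] [CompleteSpace H]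
    [TopologicalSpace.SeparableSpace H] [MeasurableSpace H] [BorelSpace H]
    (T : ℝ)
    (f : ℝ → H → H)
    (hF1 : ∀ x : H, Measurable (fun t => f t x))
    (hF2 : ∀ t ∈ Icc (0 : ℝ) T, ∀ (x : ℕ → H) (x₀ : H),
      Tendsto x atTop (𝓝 x₀) →
      ∀ y : H, Tendsto (fun n => (inner ℂ y (f t (x n)) : ℂ)) atTop (𝓝 (inner ℂ y (f t x₀))))
    (a : ℝ) (ha : 0 < a) (b : ℝ → ℝ)
    (hb : MemLp b 2 (volume.restrict (Icc 0 T)))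
    (hgrowth : ∀ t ∈ Icc (0 : ℝ) T, ∀ x : H, ‖f t x‖ ≤ a * ‖x‖ + b t) :
    (∀ u : ℝ → H, MemLp u 2 (volume.restrict (Icc 0 T)) →
      MemLp (fun t => f t (u t)) 2 (volume.restrict (Icc 0 T)) ∧
      eLpNorm (fun t => f t (u t)) 2 (volume.restrict (Icc 0 T))
        ≤ ENNReal.ofReal a * eLpNorm u 2 (volume.restrict (Icc 0 T))
          + eLpNorm b 2 (volume.restrict (Icc 0 T))) ∧
    (∀ R : ℝ≥0∞, R < ⊤ → ∃ R' : ℝ≥0∞, R' < ⊤ ∧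
      ∀ u : ℝ → H, MemLp u 2 (volume.restrict (Icc 0 T)) →
        eLpNorm u 2 (volume.restrict (Icc 0 T)) ≤ R →
        eLpNorm (fun t => f t (u t)) 2 (volume.restrict (Icc 0 T)) ≤ R') := by
  set μ := volume.restrict (Icc (0 : ℝ) T)
  have hIcc : ∀ᵐ t ∂μ, t ∈ Icc 0 T := ae_restrict_mem measurableSet_Icc
  have hbound : ∀ u : ℝ → H, MemLp u 2 μ →
      eLpNorm (fun t => f t (u t)) 2 μ ≤ ENNReal.ofReal a * eLpNorm u 2 μ + eLpNorm b 2 μ :=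
    fun u hu => eLpNorm_le_of_norm_le_mul_add one_le_two ha.le hu.1 hb.1
      (hIcc.mono fun t ht => hgrowth t ht (u t))
  have hfinite : ∀ r < ∞, ENNReal.ofReal a * r + eLpNorm b 2 μ < ∞ := fun r hr =>
    ENNReal.add_lt_top.mpr ⟨ENNReal.mul_lt_top ENNReal.ofReal_lt_top hr, hb.2⟩
  refine ⟨fun u hu => ⟨⟨?_, (hbound u hu).trans_lt (hfinite _ hu.2)⟩, hbound u hu⟩,
    fun R hR => ⟨_, hfinite R hR, fun u hu huR => (hbound u hu).trans ?_⟩⟩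
  · exact aestronglyMeasurable_superposition hF1 (hIcc.mono hF2) hu.1
  · gcongr

/-- Lemma 4.2 (well-definedness and boundedness): the superposition operator of a map
measurable in `t`, demicontinuous in `x` and of sublinear growth maps `L²([0,T],H)`
into itself with the natural norm bound, and maps bounded sets into bounded sets. -/
theorem stmt6 {H : Type*} [NormedAddCommGroup H] [InnerProductSpace ℂ H] [CompleteSpace H]
    [TopologicalSpace.SeparableSpace H] [MeasurableSpace H] [BorelSpace H]
    (T : ℝ) (hT : 0 < T)
    (f : ℝ → H → H)
    (hF1 : ∀ x : H, Measurable (fun t => f t x))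
    (hF2 : ∀ t ∈ Icc (0 : ℝ) T, ∀ (x : ℕ → H) (x₀ : H),
      Tendsto x atTop (𝓝 x₀) →
      ∀ y : H, Tendsto (fun n => (inner ℂ y (f t (x n)) : ℂ)) atTop (𝓝 (inner ℂ y (f t x₀))))
    (a : ℝ) (ha : 0 < a) (b : ℝ → ℝ) (hb0 : ∀ t, 0 ≤ b t)
    (hb : MemLp b 2 (volume.restrict (Icc 0 T)))
    (hgrowth : ∀ t ∈ Icc (0 : ℝ) T, ∀ x : H, ‖f t x‖ ≤ a * ‖x‖ + b t) :
    (∀ u : ℝ → H, MemLp u 2 (volume.restrict (Icc 0 T)) →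
      MemLp (fun t => f t (u t)) 2 (volume.restrict (Icc 0 T)) ∧
      eLpNorm (fun t => f t (u t)) 2 (volume.restrict (Icc 0 T))
        ≤ ENNReal.ofReal a * eLpNorm u 2 (volume.restrict (Icc 0 T))
          + eLpNorm b 2 (volume.restrict (Icc 0 T))) ∧
    (∀ R : ℝ≥0∞, R < ⊤ → ∃ R' : ℝ≥0∞, R' < ⊤ ∧
      ∀ u : ℝ → H, MemLp u 2 (volume.restrict (Icc 0 T)) →
        eLpNorm u 2 (volume.restrict (Icc 0 T)) ≤ R →
        eLpNorm (fun t => f t (u t)) 2 (volume.restrict (Icc 0 T)) ≤ R') :=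
  stmt6_general T f hF1 hF2 a ha b hb hgrowth
end

section
/- Let H be a separable complex Hilbert space and T > 0. Let f : [0,T] × H → H satisfy: (F1) for each x ∈ H the map t ↦ f(t,x) is measurable; (F2) for each t ∈ [0,T] the map f(t,·) is demicontinuous, i.e. whenever x_n → x strongly in H, f(t,x_n) converges weakly to f(t,x); (F3) there exist a > 0 and a nonnegative b ∈ L²([0,T],ℝ) such that ‖f(t,x)‖ ≤ a‖x‖ + b(t) for all (t,x) ∈ [0,T] × H. Then the superposition operator N_f : L²([0,T],H) → L²([0,T],H), N_f(u)(t) := f(t,u(t)), is demicontinuous: if u_n → u strongly in L²([0,T],H), then N_f(u_n) converges weakly to N_f(u) in L²([0,T],H), i.e. for every v ∈ L²([0,T],H) one has ∫₀ᵀ ⟨f(t,u_n(t)), v(t)⟩_H dt → ∫₀ᵀ ⟨f(t,u(t)), v(t)⟩_H dt. -/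
/-! Pass to a subsequence along which `u n → u` almost everywhere. For a.e. `t`, demicontinuity
of `f t` then gives `⟪v t, f t (u n t)⟫ → ⟪v t, f t (u t)⟫`, and the growth bound dominates these
scalars by `a ‖v t‖ ‖u n t‖ + ‖v t‖ b t`, a sequence converging in `L¹` by Hölder, hence uniformly
integrable. Vitali's theorem turns the a.e. convergence into convergence of the integrals, and
since every subsequence has such a further subsequence, the whole sequence converges. -/

open MeasureTheory Set Filter
open scoped ENNReal Topology

namespace MeasureTheory

variable {α E G : Type*} {m : MeasurableSpace α} {μ : Measure α} [NormedAddCommGroup G]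

theorem aestronglyMeasurable_apply_simpleFunc {F : α → E → G}
    (hmeas : ∀ x, AEStronglyMeasurable (F · x) μ) (s : SimpleFunc α E) :
    AEStronglyMeasurable (fun t => F t (s t)) μ := by
  have hsum : (fun t => F t (s t)) = fun t => ∑ c ∈ s.range, (s ⁻¹' {c}).indicator (F · c) t := by
    ext t
    rw [Finset.sum_eq_single_of_mem (s t) (s.mem_range_self t)]
    · simp
    · intro c _ hc
      exact indicator_of_notMem (Ne.symm hc) _
  rw [hsum]
  exact Finset.aestronglyMeasurable_fun_sum _ fun c _ =>
    (hmeas c).indicator (s.measurableSet_fiber c)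

theorem aestronglyMeasurable_apply_of_ae_continuous [TopologicalSpace E] {F : α → E → G}
    (hmeas : ∀ x, AEStronglyMeasurable (F · x) μ) (hcont : ∀ᵐ t ∂μ, Continuous (F t))
    {w : α → E} (hw : AEStronglyMeasurable w μ) :
    AEStronglyMeasurable (fun t => F t (w t)) μ := by
  refine aestronglyMeasurable_of_tendsto_ae atTop
    (fun n => aestronglyMeasurable_apply_simpleFunc hmeas (hw.stronglyMeasurable_mk.approx n)) ?_
  filter_upwards [hcont, hw.ae_eq_mk] with t ht hwt
  rw [hwt]
  exact (ht.tendsto _).comp (hw.stronglyMeasurable_mk.tendsto_approx t)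

variable [NormedAddCommGroup E]

theorem UnifIntegrable.mono {ι : Type*} {p : ℝ≥0∞} {f : ι → α → E} {g : ι → α → G}
    (hg : UnifIntegrable g p μ) (hfg : ∀ i, ∀ᵐ t ∂μ, ‖f i t‖ ≤ ‖g i t‖) :
    UnifIntegrable f p μ := by
  intro ε hε
  obtain ⟨δ, hδ, hgδ⟩ := hg hε
  refine ⟨δ, hδ, fun i s hs hμs => (eLpNorm_mono_ae ?_).trans (hgδ i s hs hμs)⟩
  filter_upwards [hfg i] with t ht
  by_cases hts : t ∈ s <;> simp [hts, ht]

theorem tendsto_eLpNorm_mul_norm_sub_mul_norm {p q : ℝ≥0∞} [p.HolderConjugate q]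
    {c : α → ℝ} (hc : MemLp c q μ) {w : ℕ → α → E} {u : α → E}
    (hw : ∀ n, AEStronglyMeasurable (w n) μ) (hu : AEStronglyMeasurable u μ)
    (hwu : Tendsto (fun n => eLpNorm (w n - u) p μ) atTop (𝓝 0)) :
    Tendsto (fun n => eLpNorm (fun t => c t * ‖w n t‖ - c t * ‖u t‖) 1 μ) atTop (𝓝 0) := by
  have hle : ∀ n, eLpNorm (fun t => c t * ‖w n t‖ - c t * ‖u t‖) 1 μ
      ≤ eLpNorm c q μ * eLpNorm (w n - u) p μ := by
    intro n
    calc eLpNorm (fun t => c t * ‖w n t‖ - c t * ‖u t‖) 1 μ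
        ≤ eLpNorm (fun t => c t * ‖(w n - u) t‖) 1 μ := by
          refine eLpNorm_mono fun t => ?_
          rw [← mul_sub, norm_mul, norm_mul, norm_norm]
          gcongr
          exact abs_norm_sub_norm_le _ _
      _ ≤ 1 * eLpNorm c q μ * eLpNorm (w n - u) p μ :=
          eLpNorm_le_eLpNorm_mul_eLpNorm'_of_norm hc.1 ((hw n).sub hu)
            (fun r x => r * ‖x‖) 1 (.of_forall fun t => by simp [norm_mul])
      _ = eLpNorm c q μ * eLpNorm (w n - u) p μ := by rw [one_mul]
  have hlim : Tendsto (fun n => eLpNorm c q μ * eLpNorm (w n - u) p μ) atTop (𝓝 0) := by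
    simpa using ENNReal.Tendsto.const_mul hwu (Or.inr hc.eLpNorm_ne_top)
  exact tendsto_of_tendsto_of_tendsto_of_le_of_le tendsto_const_nhds hlim (fun _ => bot_le) hle

section Caratheodory

variable {p q : ℝ≥0∞} [p.HolderConjugate q] {F : α → E → G} {c d : α → ℝ}

theorem integrable_apply_of_norm_le (hmeas : ∀ x, AEStronglyMeasurable (F · x) μ)
    (hcont : ∀ᵐ t ∂μ, Continuous (F t)) (hc : MemLp c q μ) (hd : Integrable d μ)
    (hbound : ∀ᵐ t ∂μ, ∀ x, ‖F t x‖ ≤ c t * ‖x‖ + d t) {w : α → E} (hw : MemLp w p μ) :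
    Integrable (fun t => F t (w t)) μ := by
  have hcw : Integrable (fun t => c t * ‖w t‖) μ := memLp_one_iff_integrable.1 (hw.norm.mul hc)
  refine (hcw.add hd).mono' (aestronglyMeasurable_apply_of_ae_continuous hmeas hcont hw.1) ?_
  filter_upwards [hbound] with t ht
  exact ht (w t)

variable [NormedSpace ℝ G] [IsFiniteMeasure μ]

theorem tendsto_integral_apply_of_tendsto_ae (hmeas : ∀ x, AEStronglyMeasurable (F · x) μ)
    (hcont : ∀ᵐ t ∂μ, Continuous (F t)) (hc : MemLp c q μ) (hd : Integrable d μ)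
    (hbound : ∀ᵐ t ∂μ, ∀ x, ‖F t x‖ ≤ c t * ‖x‖ + d t)
    {w : ℕ → α → E} {u : α → E} (hw : ∀ n, MemLp (w n) p μ) (hu : MemLp u p μ)
    (hwu : Tendsto (fun n => eLpNorm (w n - u) p μ) atTop (𝓝 0))
    (hae : ∀ᵐ t ∂μ, Tendsto (fun n => w n t) atTop (𝓝 (u t))) :
    Tendsto (fun n => ∫ t, F t (w n t) ∂μ) atTop (𝓝 (∫ t, F t (u t) ∂μ)) := by
  have hFint : ∀ {v : α → E}, MemLp v p μ → Integrable (fun t => F t (v t)) μ :=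
    integrable_apply_of_norm_le hmeas hcont hc hd hbound
  have hcw : ∀ {v : α → E}, MemLp v p μ → MemLp (fun t => c t * ‖v t‖) 1 μ :=
    fun hv => hv.norm.mul hc
  have hdom : UnifIntegrable (fun n t => c t * ‖w n t‖ + d t) 1 μ :=
    (unifIntegrable_of_tendsto_Lp le_rfl ENNReal.one_ne_top (fun n => hcw (hw n)) (hcw hu)
      (tendsto_eLpNorm_mul_norm_sub_mul_norm hc (fun n => (hw n).1) hu.1 hwu)).add
      (unifIntegrable_const le_rfl ENNReal.one_ne_top (memLp_one_iff_integrable.2 hd)) le_rfl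
      (fun n => (hcw (hw n)).1) fun _ => hd.1
  have hUI : UnifIntegrable (fun n t => F t (w n t)) 1 μ :=
    hdom.mono fun n => by
      filter_upwards [hbound] with t ht
      exact (ht _).trans (le_abs_self _)
  have hL1 : Tendsto (fun n => eLpNorm ((fun t => F t (w n t)) - fun t => F t (u t)) 1 μ)
      atTop (𝓝 0) := by
    refine tendsto_Lp_finite_of_tendsto_ae le_rfl ENNReal.one_ne_top (fun n => (hFint (hw n)).1)
      (memLp_one_iff_integrable.2 (hFint hu)) hUI ?_
    filter_upwards [hae, hcont] with t hwt ht
    exact (ht.tendsto _).comp hwt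
  exact tendsto_integral_of_L1' _ (hFint hu).1 (.of_forall fun n => hFint (hw n)) hL1

theorem tendsto_integral_apply_of_tendsto_eLpNorm (hmeas : ∀ x, AEStronglyMeasurable (F · x) μ)
    (hcont : ∀ᵐ t ∂μ, Continuous (F t)) (hc : MemLp c q μ) (hd : Integrable d μ)
    (hbound : ∀ᵐ t ∂μ, ∀ x, ‖F t x‖ ≤ c t * ‖x‖ + d t)
    {w : ℕ → α → E} {u : α → E} (hw : ∀ n, MemLp (w n) p μ) (hu : MemLp u p μ)
    (hwu : Tendsto (fun n => eLpNorm (w n - u) p μ) atTop (𝓝 0)) :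
    Tendsto (fun n => ∫ t, F t (w n t) ∂μ) atTop (𝓝 (∫ t, F t (u t) ∂μ)) := by
  refine tendsto_of_subseq_tendsto fun ns hns => ?_
  have hwu' := hwu.comp hns
  obtain ⟨ms, hms, hae⟩ := (tendstoInMeasure_of_tendsto_eLpNorm
    (ENNReal.HolderConjugate.ne_zero p q) (fun n => (hw (ns n)).1) hu.1 hwu').exists_seq_tendsto_ae
  exact ⟨ms, tendsto_integral_apply_of_tendsto_ae hmeas hcont hc hd hbound (fun n => hw _) hu
    (hwu'.comp hms.tendsto_atTop) hae⟩

end Caratheodory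

end MeasureTheory

theorem stmt7_general {H : Type*} [NormedAddCommGroup H] [InnerProductSpace ℂ H]
    [TopologicalSpace.SeparableSpace H] [MeasurableSpace H] [BorelSpace H]
    (T : ℝ)
    (f : ℝ → H → H)
    (hF1 : ∀ x : H, Measurable (fun t => f t x))
    (hF2 : ∀ t ∈ Icc (0 : ℝ) T, ∀ (x : ℕ → H) (x₀ : H),
      Tendsto x atTop (𝓝 x₀) →
      ∀ y : H, Tendsto (fun n => (inner ℂ y (f t (x n)) : ℂ)) atTop (𝓝 (inner ℂ y (f t x₀))))
    (a : ℝ) (b : ℝ → ℝ)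
    (hb : MemLp b 2 (volume.restrict (Icc 0 T)))
    (hgrowth : ∀ t ∈ Icc (0 : ℝ) T, ∀ x : H, ‖f t x‖ ≤ a * ‖x‖ + b t) :
    ∀ (un : ℕ → ℝ → H) (u : ℝ → H),
      (∀ n, MemLp (un n) 2 (volume.restrict (Icc 0 T))) →
      MemLp u 2 (volume.restrict (Icc 0 T)) →
      Tendsto (fun n => eLpNorm (fun t => un n t - u t) 2 (volume.restrict (Icc 0 T)))
        atTop (𝓝 0) →
      ∀ v : ℝ → H, MemLp v 2 (volume.restrict (Icc 0 T)) →
        Tendsto (fun n => ∫ t in Icc 0 T, (inner ℂ (v t) (f t (un n t)) : ℂ)) atTop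
          (𝓝 (∫ t in Icc 0 T, (inner ℂ (v t) (f t (u t)) : ℂ))) := by
  intro un u hun hu htend v hv
  have : SecondCountableTopology H := UniformSpace.secondCountable_of_separable H
  have hIcc : ∀ᵐ t ∂volume.restrict (Icc 0 T), t ∈ Icc 0 T := ae_restrict_mem measurableSet_Icc
  refine tendsto_integral_apply_of_tendsto_eLpNorm (q := 2) (F := fun t x => inner ℂ (v t) (f t x))
    (c := fun t => a * ‖v t‖) (d := fun t => ‖v t‖ * b t)
    (fun x => hv.1.inner (hF1 x).aestronglyMeasurable) ?_ (hv.norm.const_mul a)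
    (memLp_one_iff_integrable.1 (hb.mul hv.norm)) ?_ hun hu htend
  · filter_upwards [hIcc] with t ht
    exact continuous_iff_seqContinuous.2 fun {x x₀} hx => hF2 t ht x x₀ hx (v t)
  · filter_upwards [hIcc] with t ht x
    calc ‖(inner ℂ (v t) (f t x) : ℂ)‖ ≤ ‖v t‖ * ‖f t x‖ := norm_inner_le_norm _ _
      _ ≤ ‖v t‖ * (a * ‖x‖ + b t) := by gcongr; exact hgrowth t ht x
      _ = a * ‖v t‖ * ‖x‖ + ‖v t‖ * b t := by ring

/-- Lemma 4.2 (demicontinuity): if `u_n → u` strongly in `L²([0,T],H)` then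
`N_f(u_n) ⇀ N_f(u)` weakly in `L²([0,T],H)`. -/
theorem stmt7 {H : Type*} [NormedAddCommGroup H] [InnerProductSpace ℂ H] [CompleteSpace H]
    [TopologicalSpace.SeparableSpace H] [MeasurableSpace H] [BorelSpace H]
    (T : ℝ) (hT : 0 < T)
    (f : ℝ → H → H)
    (hF1 : ∀ x : H, Measurable (fun t => f t x))
    (hF2 : ∀ t ∈ Icc (0 : ℝ) T, ∀ (x : ℕ → H) (x₀ : H),
      Tendsto x atTop (𝓝 x₀) →
      ∀ y : H, Tendsto (fun n => (inner ℂ y (f t (x n)) : ℂ)) atTop (𝓝 (inner ℂ y (f t x₀))))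
    (a : ℝ) (ha : 0 < a) (b : ℝ → ℝ) (hb0 : ∀ t, 0 ≤ b t)
    (hb : MemLp b 2 (volume.restrict (Icc 0 T)))
    (hgrowth : ∀ t ∈ Icc (0 : ℝ) T, ∀ x : H, ‖f t x‖ ≤ a * ‖x‖ + b t) :
    ∀ (un : ℕ → ℝ → H) (u : ℝ → H),
      (∀ n, MemLp (un n) 2 (volume.restrict (Icc 0 T))) →
      MemLp u 2 (volume.restrict (Icc 0 T)) →
      Tendsto (fun n => eLpNorm (fun t => un n t - u t) 2 (volume.restrict (Icc 0 T)))
        atTop (𝓝 0) →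
      ∀ v : ℝ → H, MemLp v 2 (volume.restrict (Icc 0 T)) →
        Tendsto (fun n => ∫ t in Icc 0 T, (inner ℂ (v t) (f t (un n t)) : ℂ)) atTop
          (𝓝 (∫ t in Icc 0 T, (inner ℂ (v t) (f t (u t)) : ℂ))) :=
  stmt7_general T f hF1 hF2 a b hb hgrowth
end
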